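/- Fix an integer n ≥ 2, and for g ∈ Z/nZ let ḡ ∈ {0, 1, …, n−1} denote its canonical integer representative. The inhomogeneous 3-cocycle α : (Z/nZ)³ → Z/nZ defined by α(g₁, g₂, g₃) = (1/n)·ḡ₁·(ḡ₂ + ḡ₃ − (g₂+g₃)‾) mod n has cohomology class of order n in H^3(Z/nZ, Z/nZ); in particular its class generates H^3(Z/nZ, Z/nZ) ≅ Z/nZ. -/

import Mathlib

open CategoryTheory groupCohomology

noncomputable section

/-- For `g : ℤ/nℤ`, `(g.val : ℤ)` is its canonical integer representative in `{0, …, n−1}`.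
`cocycleAlpha n g₁ g₂ g₃` is the reduction mod `n` of the exact integer quotient
`ḡ₁ · (ḡ₂ + ḡ₃ − (g₂+g₃)‾) / n`. -/
def cocycleAlpha (n : ℕ) (g₁ g₂ g₃ : ZMod n) : ZMod n :=
  ((((g₁.val : ℤ) * (((g₂.val : ℤ) + (g₃.val : ℤ) - ((g₂ + g₃).val : ℤ)) / (n : ℤ))) : ℤ) :
    ZMod n)

/-- `cocycleAlpha`, as an inhomogeneous 3-cochain of the group `ℤ/nℤ` (written
multiplicatively) with coefficients in the trivial module `ℤ/nℤ`; that is, as an element of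
degree 3 of the complex of inhomogeneous cochains. -/
def alphaCochain (n : ℕ) :
    (inhomogeneousCochains (Rep.trivial ℤ (Multiplicative (ZMod n)) (ZMod n))).X 3 :=
  fun g => cocycleAlpha n (Multiplicative.toAdd (g 0)) (Multiplicative.toAdd (g 1))
    (Multiplicative.toAdd (g 2))

/-!
Write `ℤ/n` additively, with generator `1`. Evaluating a 3-cochain `f` on the chain
`∑ₓ [1 | x | 1]` of the bar complex kills coboundaries, so it is a map `H³(ℤ/n, M) → M`. It is
injective: for a cocycle `f` put `S_c(m) = ∑_{i<m} f(1, i, c)`. The cocycle identity makes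
`c ↦ S_c(n)` additive, so if it vanishes at `c = 1` it vanishes everywhere, `S_c` is `n`-periodic,
and then `β(a, b) = f(0, 0, b) - S_b(ā)` satisfies `dβ = f`. Finally `α` evaluates to `1`, since
among the terms `α(1, x, 1)` only `x = -1` produces a carry in `1̄ + x̄ - (1 + x)‾`. Hence the class
of `α` has order `n` and generates.
-/

open Multiplicative Finset

universe u

section Differentials

variable {k G : Type u} [CommRing k] [Group G] (A : Rep k G)

lemma inhomogeneousCochains.d_two_apply (β : (Fin 2 → G) → A) (g : Fin 3 → G) :
    inhomogeneousCochains.d A 2 β g =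
      A.ρ (g 0) (β ![g 1, g 2]) - β ![g 0 * g 1, g 2] + β ![g 0, g 1 * g 2] - β ![g 0, g 1] := by
  have e0 : (fun i : Fin 2 => g i.succ) = ![g 1, g 2] := by ext i; fin_cases i <;> rfl
  have e1 : Fin.contractNth 0 (· * ·) g = ![g 0 * g 1, g 2] := by ext i; fin_cases i <;> rfl
  have e2 : Fin.contractNth 1 (· * ·) g = ![g 0, g 1 * g 2] := by ext i; fin_cases i <;> rfl
  have e3 : Fin.contractNth 2 (· * ·) g = ![g 0, g 1] := by ext i; fin_cases i <;> rfl
  rw [inhomogeneousCochains.d_hom_apply, Fin.sum_univ_three, e0, e1, e2, e3]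
  simp [pow_succ, sub_eq_add_neg, add_assoc]

lemma inhomogeneousCochains.d_three_apply (f : (Fin 3 → G) → A) (g : Fin 4 → G) :
    inhomogeneousCochains.d A 3 f g =
      A.ρ (g 0) (f ![g 1, g 2, g 3]) - f ![g 0 * g 1, g 2, g 3] + f ![g 0, g 1 * g 2, g 3]
        - f ![g 0, g 1, g 2 * g 3] + f ![g 0, g 1, g 2] := by
  have e0 : (fun i : Fin 3 => g i.succ) = ![g 1, g 2, g 3] := by ext i; fin_cases i <;> rfl
  have e1 : Fin.contractNth 0 (· * ·) g = ![g 0 * g 1, g 2, g 3] := by ext i; fin_cases i <;> rfl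
  have e2 : Fin.contractNth 1 (· * ·) g = ![g 0, g 1 * g 2, g 3] := by ext i; fin_cases i <;> rfl
  have e3 : Fin.contractNth 2 (· * ·) g = ![g 0, g 1, g 2 * g 3] := by ext i; fin_cases i <;> rfl
  have e4 : Fin.contractNth 3 (· * ·) g = ![g 0, g 1, g 2] := by ext i; fin_cases i <;> rfl
  rw [inhomogeneousCochains.d_hom_apply, Fin.sum_univ_four, e0, e1, e2, e3, e4]
  simp [pow_succ, sub_eq_add_neg, add_assoc]

end Differentials

lemma HomologicalComplex.homologyπ_eq_zero_iff_exists_d_eq {R : Type*} [Ring R] {ι : Type*}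
    {c : ComplexShape ι} (K : HomologicalComplex (ModuleCat R) c) {i j : ι} (hij : c.prev j = i)
    (z : K.cycles j) : K.homologyπ j z = 0 ↔ ∃ u, K.d i j u = K.iCycles j z := by
  have hexact := ShortComplex.exact_of_g_is_cokernel
    (ShortComplex.mk _ _ (K.toCycles_comp_homologyπ i j)) (K.homologyIsCokernel i j hij)
  have hi : Function.Injective (K.iCycles j) := (ModuleCat.mono_iff_injective _).1 inferInstance
  refine ⟨fun hz => ?_, fun ⟨u, hu⟩ => ?_⟩
  · obtain ⟨u, hu⟩ := (ShortComplex.moduleCat_exact_iff _).1 hexact z hz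
    exact ⟨u, by rw [← hu, ← K.toCycles_i i j]; rfl⟩
  · have : K.toCycles i j u = z := hi (by rw [← hu, ← K.toCycles_i i j]; rfl)
    rw [← this]
    exact ConcreteCategory.congr_hom (K.toCycles_comp_homologyπ i j) u

lemma ZMod.sum_range_natCast {n : ℕ} [NeZero n] {M : Type*} [AddCommMonoid M] (h : ZMod n → M) :
    ∑ i ∈ range n, h i = ∑ x, h x :=
  sum_nbij' (fun i => (i : ZMod n)) ZMod.val (fun _ _ => mem_univ _)
    (fun x _ => mem_range.2 (ZMod.val_lt x)) (fun _ hi => ZMod.val_cast_of_lt (mem_range.1 hi))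
    (fun x _ => ZMod.natCast_zmod_val x) (fun _ _ => rfl)

namespace ZModCochain

section

variable {n : ℕ} {M : Type*} [AddCommGroup M] {f : ZMod n → ZMod n → ZMod n → M}

def d₂ (β : ZMod n → ZMod n → M) (a b c : ZMod n) : M :=
  β b c - β (a + b) c + β a (b + c) - β a b

def IsCocycle₃ (f : ZMod n → ZMod n → ZMod n → M) : Prop :=
  ∀ a b c d, f b c d - f (a + b) c d + f a (b + c) d - f a b (c + d) + f a b c = 0

def partialMidSum (f : ZMod n → ZMod n → ZMod n → M) (c : ZMod n) (m : ℕ) : M :=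
  ∑ i ∈ range m, f 1 i c

lemma IsCocycle₃.partialMidSum_add_sub (hf : IsCocycle₃ f) (b c : ZMod n) (m : ℕ) :
    partialMidSum f (b + c) m - partialMidSum f b m
      = f 0 b c - f m b c + ∑ i ∈ range m, f 1 (i + b) c := by
  have h := sum_eq_zero (s := range m) fun i _ => hf 1 i b c
  have htel : ∑ i ∈ range m, (f i b c - f (1 + i) b c) = f 0 b c - f m b c := by
    simpa only [Nat.cast_add, Nat.cast_one, Nat.cast_zero, add_comm]
      using sum_range_sub' (fun i : ℕ => f (i : ZMod n) b c) m
  simp only [sum_add_distrib, sum_sub_distrib] at h htel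
  simp only [partialMidSum]
  linear_combination (norm := abel) htel - h

variable [NeZero n]

def midSum (f : ZMod n → ZMod n → ZMod n → M) (c : ZMod n) : M :=
  ∑ x, f 1 x c

lemma midSum_d₂ (β : ZMod n → ZMod n → M) (c : ZMod n) : midSum (d₂ β) c = 0 := by
  have h₁ : ∑ x, β (1 + x) c = ∑ x, β x c := Equiv.sum_comp (Equiv.addLeft 1) (β · c)
  have h₂ : ∑ x, β 1 (x + c) = ∑ x, β 1 x := Equiv.sum_comp (Equiv.addRight c) (β 1)
  simp only [midSum, d₂, sum_add_distrib, sum_sub_distrib, h₁, h₂]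
  abel

lemma partialMidSum_add_self (c : ZMod n) (m : ℕ) :
    partialMidSum f c (m + n) = partialMidSum f c m + midSum f c := by
  rw [partialMidSum, sum_range_add]
  push_cast
  rw [ZMod.sum_range_natCast (fun x => f 1 ((m : ZMod n) + x) c)]
  exact congrArg (partialMidSum f c m + ·) (Equiv.sum_comp (Equiv.addLeft (m : ZMod n)) (f 1 · c))

lemma IsCocycle₃.midSum_add (hf : IsCocycle₃ f) (c d : ZMod n) :
    midSum f (c + d) = midSum f c + midSum f d := by
  have h := sum_eq_zero (s := univ) fun x _ => hf 1 x c d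
  simp only [sum_add_distrib, sum_sub_distrib] at h
  have h₁ : ∑ x, f (1 + x) c d = ∑ x, f x c d := Equiv.sum_comp (Equiv.addLeft 1) (f · c d)
  have h₂ : ∑ x, f 1 (x + c) d = ∑ x, f 1 x d := Equiv.sum_comp (Equiv.addRight c) (f 1 · d)
  rw [h₁, h₂] at h
  simp only [midSum]
  linear_combination (norm := abel) -h

lemma IsCocycle₃.midSum_eq_zero (hf : IsCocycle₃ f) (h₁ : midSum f 1 = 0) (c : ZMod n) :
    midSum f c = 0 := by
  let F : ZMod n →+ M := AddMonoidHom.mk' (midSum f) hf.midSum_add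
  rw [← ZMod.natCast_zmod_val c, ← nsmul_one]
  exact (map_nsmul F _ 1).trans (by rw [show F 1 = 0 from h₁, smul_zero])

lemma IsCocycle₃.partialMidSum_periodic (hf : IsCocycle₃ f) (h₁ : midSum f 1 = 0) (c : ZMod n) :
    Function.Periodic (partialMidSum f c) n :=
  fun m => by rw [partialMidSum_add_self, hf.midSum_eq_zero h₁, add_zero]

theorem IsCocycle₃.exists_d₂_eq (hf : IsCocycle₃ f) (h₁ : midSum f 1 = 0) :
    ∃ β : ZMod n → ZMod n → M, d₂ β = f := by
  refine ⟨fun a b => f 0 0 b - partialMidSum f b a.val, ?_⟩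
  funext a b c
  have hf₀ : f 0 b c = f 0 0 (b + c) - f 0 0 b := by
    have := hf 0 0 b c
    simp only [zero_add] at this
    linear_combination (norm := abel) this
  have htel := hf.partialMidSum_add_sub b c a.val
  rw [ZMod.natCast_zmod_val] at htel
  have hshift : ∑ i ∈ range a.val, f 1 (i + b) c
      = partialMidSum f c (b.val + a.val) - partialMidSum f c b.val := by
    simp only [partialMidSum, sum_range_add, Nat.cast_add, ZMod.natCast_zmod_val, add_comm b,
      add_sub_cancel_left]
  have hwrap : partialMidSum f c (a + b).val = partialMidSum f c (b.val + a.val) := by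
    rw [ZMod.val_add, (hf.partialMidSum_periodic h₁ c).map_mod_nat, add_comm]
  simp only [d₂]
  linear_combination (norm := abel) hwrap - htel - hf₀ - hshift

end

section

variable {n : ℕ} {M : Type}

def curry₂ (β : (Fin 2 → Multiplicative (ZMod n)) → M) (a b : ZMod n) : M :=
  β ![ofAdd a, ofAdd b]

def curry₃ (f : (Fin 3 → Multiplicative (ZMod n)) → M) (a b c : ZMod n) : M :=
  f ![ofAdd a, ofAdd b, ofAdd c]

lemma curry₃_injective :
    Function.Injective (curry₃ : ((Fin 3 → Multiplicative (ZMod n)) → M) → _) := by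
  intro f f' h
  funext g
  have hg : g = ![ofAdd (toAdd (g 0)), ofAdd (toAdd (g 1)), ofAdd (toAdd (g 2))] := by
    ext i; fin_cases i <;> rfl
  rw [hg]
  exact congrFun (congrFun (congrFun h _) _) _

variable {k : Type} [CommRing k] [AddCommGroup M] [Module k M]

variable (k) in
lemma curry₃_d_two (β : (Fin 2 → Multiplicative (ZMod n)) → M) :
    curry₃ (inhomogeneousCochains.d (Rep.trivial k (Multiplicative (ZMod n)) M) 2 β)
      = d₂ (curry₂ β) := by
  funext a b c
  rw [curry₃, inhomogeneousCochains.d_two_apply]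
  simp [curry₂, d₂, ofAdd_add]

lemma isCocycle₃_curry₃ {f : (Fin 3 → Multiplicative (ZMod n)) → M}
    (hf : inhomogeneousCochains.d (Rep.trivial k (Multiplicative (ZMod n)) M) 3 f = 0) :
    IsCocycle₃ (curry₃ f) := by
  intro a b c d
  have h : inhomogeneousCochains.d (Rep.trivial k (Multiplicative (ZMod n)) M) 3 f
      ![ofAdd a, ofAdd b, ofAdd c, ofAdd d] = 0 := congrFun hf _
  rw [inhomogeneousCochains.d_three_apply] at h
  simpa [curry₃, ofAdd_add] using h

variable [NeZero n]

def threeCyclePairing : ((Fin 3 → Multiplicative (ZMod n)) → M) →+ M :=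
  AddMonoidHom.mk' (fun f => midSum (curry₃ f) 1) fun f f' => by
    simp [midSum, curry₃, sum_add_distrib]

theorem π_eq_zero_iff_threeCyclePairing_eq_zero
    (z : cocycles (Rep.trivial k (Multiplicative (ZMod n)) M) 3) :
    π _ 3 z = 0 ↔ threeCyclePairing (iCocycles _ 3 z) = 0 := by
  refine (HomologicalComplex.homologyπ_eq_zero_iff_exists_d_eq _
    ((ComplexShape.up ℕ).prev_eq' (i := 3) (j := 2) rfl) z).trans ?_
  rw [inhomogeneousCochains.d_def]
  constructor
  · rintro ⟨u, hu⟩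
    rw [← hu]
    show midSum (curry₃ _) 1 = 0
    rw [curry₃_d_two]
    exact midSum_d₂ _ 1
  · intro h
    have hz : IsCocycle₃ (curry₃ ((inhomogeneousCochains _).iCycles 3 z)) := by
      refine isCocycle₃_curry₃ (k := k) ?_
      rw [← inhomogeneousCochains.d_def]
      exact ConcreteCategory.congr_hom ((inhomogeneousCochains _).iCycles_d 3 4) z
    obtain ⟨β, hβ⟩ := hz.exists_d₂_eq h
    refine ⟨fun g => β (toAdd (g 0)) (toAdd (g 1)), curry₃_injective ?_⟩
    rw [curry₃_d_two, ← hβ]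
    rfl

end

end ZModCochain

open ZModCochain

lemma cocycleAlpha_one_one {n : ℕ} (hn : 2 ≤ n) (x : ZMod n) :
    cocycleAlpha n 1 x 1 = if x = -1 then 1 else 0 := by
  have : Fact (1 < n) := ⟨hn⟩
  have hx := ZMod.val_lt x
  unfold cocycleAlpha
  rw [ZMod.val_one]
  by_cases h : n ≤ x.val + 1
  · have hsum := ZMod.val_add_val_of_le (a := x) (b := 1) (by rwa [ZMod.val_one])
    rw [ZMod.val_one] at hsum
    have h0 : (x + 1).val = 0 := by omega
    have hn' : (x.val : ℤ) + ((1 : ℕ) : ℤ) - ((0 : ℕ) : ℤ) = n := by push_cast; omega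
    rw [if_pos (eq_neg_of_add_eq_zero_left ((ZMod.val_eq_zero _).1 h0)), h0, hn',
      Int.ediv_self (by omega)]
    simp
  · have hsum := ZMod.val_add_of_lt (a := x) (b := 1) (by rw [ZMod.val_one]; omega)
    rw [ZMod.val_one] at hsum
    rw [if_neg, hsum]
    · simp
    · rintro rfl
      rw [neg_add_cancel, ZMod.val_zero] at hsum
      omega

lemma threeCyclePairing_alphaCochain {n : ℕ} [NeZero n] (hn : 2 ≤ n) :
    threeCyclePairing (alphaCochain n) = 1 := by
  show ∑ x, cocycleAlpha n 1 x 1 = 1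
  simp [cocycleAlpha_one_one hn]

theorem addOrderOf_π_eq_and_zsmul_surjective {n : ℕ} [NeZero n] {k : Type} [CommRing k]
    [Module k (ZMod n)] (z : cocycles (Rep.trivial k (Multiplicative (ZMod n)) (ZMod n)) 3)
    (hz : threeCyclePairing (iCocycles _ 3 z) = 1) :
    addOrderOf (π _ 3 z) = n ∧ ∀ y, ∃ m : ℤ, m • π _ 3 z = y := by
  have hπ := π_eq_zero_iff_threeCyclePairing_eq_zero (k := k) (n := n) (M := ZMod n)
  refine ⟨?_, fun y => ?_⟩
  · refine (addOrderOf_eq_addOrderOf_iff.2 fun m => ?_).trans (ZMod.addOrderOf_one n)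
    rw [← map_nsmul, hπ, map_nsmul, map_nsmul, hz]
  · induction y using groupCohomology_induction_on with | h w => ?_
    refine ⟨(threeCyclePairing (iCocycles _ 3 w)).val, ?_⟩
    rw [natCast_zsmul, ← map_nsmul, ← sub_eq_zero, ← map_sub, hπ, map_sub, map_nsmul, map_sub,
      map_nsmul, hz, nsmul_one, ZMod.natCast_zmod_val, sub_self]

/-- For `n ≥ 2`, the inhomogeneous 3-cocycle
`α(g₁,g₂,g₃) = (1/n)·ḡ₁·(ḡ₂ + ḡ₃ − (g₂+g₃)‾) mod n` of `ℤ/nℤ` with coefficients in the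
trivial module `ℤ/nℤ` (the hypothesis `hcoc` states precisely that the corresponding
3-cochain is a cocycle) has cohomology class of (additive) order `n` in `H³(ℤ/nℤ, ℤ/nℤ)`;
in particular its class generates `H³(ℤ/nℤ, ℤ/nℤ) ≅ ℤ/nℤ`. -/
theorem alphaCochain_class_addOrderOf_eq (n : ℕ) (hn : 2 ≤ n)
    (φ : ModuleCat.of ℤ ℤ ⟶
      (inhomogeneousCochains (Rep.trivial ℤ (Multiplicative (ZMod n)) (ZMod n))).X 3)
    (hφ : φ = ModuleCat.ofHom (LinearMap.toSpanSingleton ℤ _ (alphaCochain n)))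
    (hcoc : φ ≫ (inhomogeneousCochains (Rep.trivial ℤ (Multiplicative (ZMod n)) (ZMod n))).d 3 4
      = 0) :
    addOrderOf
      (((inhomogeneousCochains
            (Rep.trivial ℤ (Multiplicative (ZMod n)) (ZMod n))).liftCycles φ 4
          ((ComplexShape.up ℕ).next_eq' rfl) hcoc ≫
        (inhomogeneousCochains
          (Rep.trivial ℤ (Multiplicative (ZMod n)) (ZMod n))).homologyπ 3) (1 : ℤ)) = n ∧
    ∀ y : groupCohomology (Rep.trivial ℤ (Multiplicative (ZMod n)) (ZMod n)) 3,
      ∃ m : ℤ,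
        m • (((inhomogeneousCochains
            (Rep.trivial ℤ (Multiplicative (ZMod n)) (ZMod n))).liftCycles φ 4
          ((ComplexShape.up ℕ).next_eq' rfl) hcoc ≫
        (inhomogeneousCochains
          (Rep.trivial ℤ (Multiplicative (ZMod n)) (ZMod n))).homologyπ 3) (1 : ℤ)) = y := by
  have : NeZero n := ⟨by omega⟩
  refine addOrderOf_π_eq_and_zsmul_surjective _ ?_
  rw [← threeCyclePairing_alphaCochain hn]
  congr 1
  subst hφ
  have h := ConcreteCategory.congr_hom ((inhomogeneousCochains
    (Rep.trivial ℤ (Multiplicative (ZMod n)) (ZMod n))).liftCycles_i _ 4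
      ((ComplexShape.up ℕ).next_eq' rfl) hcoc) (1 : ℤ)
  exact h.trans (one_smul ℤ (alphaCochain n))
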